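/- Let h(s) = ∑_{μ∈S} e^{⟨μ,s⟩} be a finite sum of exponentials with S−S spanning 𝔞, and let g = ∇ log h. Then at every point s ∈ 𝔞, the differential dg_s satisfies ⟨u, dg_s(u)⟩ = (1/(2h(s)²))·∑_{μ,μ'∈S} (⟨μ,u⟩ − ⟨μ',u⟩)² e^{⟨μ+μ',s⟩} > 0 for all nonzero u ∈ 𝔞; in particular g is locally invertible everywhere. -/

import Mathlib

/-!
Writing `e_μ = e^{⟪μ,s⟫}`, the map `g = ∇h / h` sends `s` to the mean of `μ` under the Gibbs
weights `e_μ / h(s)`, and differentiating shows that `⟪u, dg_s u⟫` is the variance of `⟪μ, u⟫`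
under these weights. Lagrange's identity writes this variance as the stated double sum, which
vanishes only if `⟪μ, u⟫` is constant on `S`, i.e. only if `u` is orthogonal to `S - S`, hence
to all of `𝔞`. So `dg_s` is injective, thus invertible, and the inverse function theorem gives
local injectivity of `g`.
-/

open scoped RealInnerProductSpace Topology
open Finset Real

theorem sum_sum_sub_sq_mul_mul {ι : Type*} (S : Finset ι) (a e : ι → ℝ) :
    ∑ μ ∈ S, ∑ μ' ∈ S, (a μ - a μ') ^ 2 * (e μ * e μ')
      = 2 * ((∑ μ ∈ S, e μ) * ∑ μ ∈ S, e μ * a μ ^ 2) - 2 * (∑ μ ∈ S, e μ * a μ) ^ 2 := by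
  calc ∑ μ ∈ S, ∑ μ' ∈ S, (a μ - a μ') ^ 2 * (e μ * e μ')
      = ∑ μ ∈ S, ∑ μ' ∈ S, (e μ * a μ ^ 2 * e μ' + e μ * (e μ' * a μ' ^ 2)
          - 2 * (e μ * a μ * (e μ' * a μ'))) :=
        sum_congr rfl fun μ _ ↦ sum_congr rfl fun μ' _ ↦ by ring
    _ = _ := by
        simp only [sum_add_distrib, sum_sub_distrib, ← mul_sum, ← sum_mul]
        ring

theorem sum_sum_sub_sq_mul_mul_pos {ι : Type*} {S : Finset ι} {a e : ι → ℝ}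
    (he : ∀ μ ∈ S, 0 < e μ) {μ₀ μ₀' : ι} (hμ₀ : μ₀ ∈ S) (hμ₀' : μ₀' ∈ S) (hne : a μ₀ ≠ a μ₀') :
    0 < ∑ μ ∈ S, ∑ μ' ∈ S, (a μ - a μ') ^ 2 * (e μ * e μ') := by
  have hnonneg : ∀ μ ∈ S, ∀ μ' ∈ S, 0 ≤ (a μ - a μ') ^ 2 * (e μ * e μ') :=
    fun μ hμ μ' hμ' ↦ by have := he μ hμ; have := he μ' hμ'; positivity
  have hpos : 0 < (a μ₀ - a μ₀') ^ 2 * (e μ₀ * e μ₀') := by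
    have := he μ₀ hμ₀; have := he μ₀' hμ₀'; have := sub_ne_zero.2 hne; positivity
  exact sum_pos' (fun μ hμ ↦ sum_nonneg (hnonneg μ hμ))
    ⟨μ₀, hμ₀, sum_pos' (hnonneg μ₀ hμ₀) ⟨μ₀', hμ₀', hpos⟩⟩

section InnerProductSpace

variable {E : Type*} [NormedAddCommGroup E] [InnerProductSpace ℝ E]

theorem exists_inner_sub_ne_zero_of_span_eq_top {S : Set E}
    (hspan : Submodule.span ℝ {x : E | ∃ μ ∈ S, ∃ μ' ∈ S, x = μ - μ'} = ⊤) {u : E} (hu : u ≠ 0) :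
    ∃ μ ∈ S, ∃ μ' ∈ S, ⟪μ, u⟫ ≠ ⟪μ', u⟫ := by
  by_contra! hconst
  have hker : Submodule.span ℝ {x : E | ∃ μ ∈ S, ∃ μ' ∈ S, x = μ - μ'}
      ≤ LinearMap.ker (innerₛₗ ℝ u) := by
    rw [Submodule.span_le]
    rintro _ ⟨μ, hμ, μ', hμ', rfl⟩
    rw [SetLike.mem_coe, LinearMap.mem_ker, innerₛₗ_apply_apply, inner_sub_right,
      real_inner_comm μ u, real_inner_comm μ' u, hconst μ hμ μ' hμ', sub_self]
  have : ⟪u, u⟫ = 0 := by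
    simpa using hker (hspan ▸ Submodule.mem_top : u ∈ _)
  exact hu (inner_self_eq_zero.1 this)

theorem ContinuousLinearMap.injective_of_inner_map_self_pos {A : E →L[ℝ] E}
    (hA : ∀ u, u ≠ 0 → 0 < ⟪u, A u⟫) : Function.Injective A :=
  (injective_iff_map_eq_zero A).2 fun u hAu ↦ by
    by_contra hu
    simpa [hAu] using hA u hu

theorem HasStrictFDerivAt.exists_mem_nhds_injOn [FiniteDimensional ℝ E] {f : E → E}
    {f' : E →L[ℝ] E} {s : E} (hf : HasStrictFDerivAt f f' s) (hinj : Function.Injective f') :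
    ∃ t ∈ 𝓝 s, Set.InjOn f t := by
  let e : E ≃L[ℝ] E := (LinearEquiv.ofInjectiveEndo f'.toLinearMap hinj).toContinuousLinearEquiv
  have hf : HasStrictFDerivAt f (e : E →L[ℝ] E) s := by convert hf; ext; rfl
  exact ⟨(hf.toOpenPartialHomeomorph f).source,
    (hf.toOpenPartialHomeomorph f).open_source.mem_nhds hf.mem_toOpenPartialHomeomorph_source,
    (hf.toOpenPartialHomeomorph f).injOn⟩

end InnerProductSpace

section ExpSum

variable {E : Type*} [NormedAddCommGroup E] [InnerProductSpace ℝ E] (S : Finset E)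

noncomputable def expSum (t : E) : ℝ := ∑ μ ∈ S, exp ⟪μ, t⟫

noncomputable def gibbsMean (t : E) : E := (expSum S t)⁻¹ • ∑ μ ∈ S, exp ⟪μ, t⟫ • μ

variable {S}

theorem expSum_pos (hS : S.Nonempty) (t : E) : 0 < expSum S t :=
  sum_pos (fun _ _ ↦ exp_pos _) hS

variable (S)

theorem hasFDerivAt_expSum (t : E) :
    HasFDerivAt (expSum S) (∑ μ ∈ S, exp ⟪μ, t⟫ • innerSL ℝ μ) t :=
  HasFDerivAt.fun_sum fun μ _ ↦
    (hasDerivAt_exp ⟪μ, t⟫).comp_hasFDerivAt t (innerSL ℝ μ).hasFDerivAt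

theorem gradient_expSum [CompleteSpace E] (t : E) :
    gradient (expSum S) t = ∑ μ ∈ S, exp ⟪μ, t⟫ • μ := by
  refine HasGradientAt.gradient <|
    hasGradientAt_iff_hasFDerivAt.2 <| (hasFDerivAt_expSum S t).congr_fderiv ?_
  ext u
  simp [real_inner_comm]

theorem hasFDerivAt_sum_exp_inner_smul (t : E) :
    HasFDerivAt (fun t ↦ ∑ μ ∈ S, exp ⟪μ, t⟫ • μ)
      (∑ μ ∈ S, (exp ⟪μ, t⟫ • innerSL ℝ μ).smulRight μ) t :=
  HasFDerivAt.fun_sum fun μ _ ↦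
    ((hasDerivAt_exp ⟪μ, t⟫).comp_hasFDerivAt t (innerSL ℝ μ).hasFDerivAt).smul_const μ

theorem contDiff_gibbsMean (hS : S.Nonempty) {n : WithTop ℕ∞} : ContDiff ℝ n (gibbsMean S) := by
  have hexp : ∀ μ : E, ContDiff ℝ n fun t ↦ exp ⟪μ, t⟫ :=
    fun μ ↦ contDiff_exp.comp (innerSL ℝ μ).contDiff
  exact ((ContDiff.sum fun μ _ ↦ hexp μ).inv fun t ↦ (expSum_pos hS t).ne').smul
    (ContDiff.sum fun μ _ ↦ (hexp μ).smul contDiff_const)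

theorem fderiv_gibbsMean_apply (hS : S.Nonempty) (t u : E) :
    fderiv ℝ (gibbsMean S) t u = (expSum S t)⁻¹ • ∑ μ ∈ S, (exp ⟪μ, t⟫ * ⟪μ, u⟫) • μ
      - ((expSum S t ^ 2)⁻¹ * ∑ μ ∈ S, exp ⟪μ, t⟫ * ⟪μ, u⟫) • ∑ μ ∈ S, exp ⟪μ, t⟫ • μ := by
  have hinv := (hasDerivAt_inv (expSum_pos hS t).ne').comp_hasFDerivAt t (hasFDerivAt_expSum S t)
  have hmean : HasFDerivAt (gibbsMean S) _ t := hinv.smul (hasFDerivAt_sum_exp_inner_smul S t)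
  rw [hmean.fderiv]
  simp only [add_apply, smul_apply, ContinuousLinearMap.smulRight_apply, _root_.sum_apply,
    innerSL_apply_apply, Function.comp_apply, smul_eq_mul, sub_eq_add_neg, smul_sum, smul_smul,
    ← sum_neg_distrib, ← neg_smul, mul_sum, sum_mul, neg_mul, mul_assoc]

theorem inner_fderiv_gibbsMean_apply_self (hS : S.Nonempty) (t u : E) :
    ⟪u, fderiv ℝ (gibbsMean S) t u⟫ = 1 / (2 * expSum S t ^ 2) *
      ∑ μ ∈ S, ∑ μ' ∈ S, (⟪μ, u⟫ - ⟪μ', u⟫) ^ 2 * exp ⟪μ + μ', t⟫ := by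
  simp only [inner_add_left, exp_add]
  rw [sum_sum_sub_sq_mul_mul, fderiv_gibbsMean_apply S hS]
  simp only [inner_sub_right, inner_smul_right, inner_sum, real_inner_comm u]
  have := (expSum_pos hS t).ne'
  unfold expSum at this ⊢
  field_simp

theorem inner_fderiv_gibbsMean_apply_self_pos (hS : S.Nonempty)
    (hspan : Submodule.span ℝ {x : E | ∃ μ ∈ S, ∃ μ' ∈ S, x = μ - μ'} = ⊤) (t : E) {u : E}
    (hu : u ≠ 0) : 0 < ⟪u, fderiv ℝ (gibbsMean S) t u⟫ := by
  obtain ⟨μ, hμ, μ', hμ', hne⟩ := exists_inner_sub_ne_zero_of_span_eq_top hspan hu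
  rw [inner_fderiv_gibbsMean_apply_self S hS]
  simp only [inner_add_left, exp_add]
  have := expSum_pos hS t
  exact mul_pos (by positivity) (sum_sum_sub_sq_mul_mul_pos (fun _ _ ↦ exp_pos _) hμ hμ' hne)

end ExpSum

/-- For `h(s) = ∑_{μ∈S} e^{⟨μ,s⟩}` with `S - S` spanning `𝔞`, and `g = ∇h/h = ∇ log h`, at
every point `s` the differential `dg_s` satisfies
`⟨u, dg_s(u)⟩ = (1/(2h(s)²))·∑_{μ,μ'} (⟨μ,u⟩-⟨μ',u⟩)² e^{⟨μ+μ',s⟩} > 0` for `u ≠ 0`;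
in particular `g` is locally invertible everywhere. -/
theorem stmt_13 {E : Type*} [NormedAddCommGroup E] [InnerProductSpace ℝ E]
    [FiniteDimensional ℝ E]
    (S : Finset E) (hS : S.Nonempty)
    (hspan : Submodule.span ℝ {x : E | ∃ μ ∈ S, ∃ μ' ∈ S, x = μ - μ'} = ⊤)
    (h : E → ℝ) (hh : ∀ s, h s = ∑ μ ∈ S, Real.exp ⟪μ, s⟫)
    (g : E → E) (hg : ∀ s, g s = (h s)⁻¹ • gradient h s) :
    ∀ s : E,
      (∀ u : E, ⟪u, fderiv ℝ g s u⟫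
          = (1 / (2 * (h s) ^ 2)) *
              ∑ μ ∈ S, ∑ μ' ∈ S, (⟪μ, u⟫ - ⟪μ', u⟫) ^ 2 * Real.exp ⟪μ + μ', s⟫) ∧
      (∀ u : E, u ≠ 0 → 0 < ⟪u, fderiv ℝ g s u⟫) ∧
      (∃ t ∈ nhds s, Set.InjOn g t) := by
  obtain rfl : h = expSum S := funext hh
  obtain rfl : g = gibbsMean S := funext fun t ↦ by rw [hg, gradient_expSum]; rfl
  intro s
  have hpos (u : E) (hu : u ≠ 0) := inner_fderiv_gibbsMean_apply_self_pos S hS hspan s hu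
  refine ⟨inner_fderiv_gibbsMean_apply_self S hS s, hpos, ?_⟩
  exact ((contDiff_gibbsMean S hS).contDiffAt.hasStrictFDerivAt one_ne_zero).exists_mem_nhds_injOn
    (ContinuousLinearMap.injective_of_inner_map_self_pos hpos)
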